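/- arXiv:2506.23217 — 3 statements merged into one kernel-verified Lean document; each statement's English description precedes it below -/
import Mathlib

section
/- If in addition to the exponential bound ‖Φ(t,s)‖ ≤ K α^{t−s} the derivative satisfies ‖D₂F(t,x)‖ ≤ M₁ for all t, x, then the derivative D₃φ(s,t,η) of the general solution with respect to the initial value satisfies ‖D₃φ(s,t,η)‖ ≤ K·(α + K·M₁)^{t−s} for all s ≤ t and η ∈ X. -/
/-!
Start time at `s` and write `Y n = D₃φ(s, s+n, η)`, `B i = D₂F(s+i, φ(s, s+i, η))`. Then `Y` solves
the recursion of `A` perturbed by `B`, so variation of constants gives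
`Y n = Φ n 0 + ∑_{i<n} Φ n (i+1) B i Y i`. If `‖Y i‖ ≤ K β^i` for `i < n`, where `β = α + K M₁`, the
right side has norm at most `K α^n + K² M₁ ∑_{i<n} β^i α^(n-1-i) = K α^n + K (β^n - α^n) = K β^n`:
the geometric sum identity applies because `β - α = K M₁`.
-/

open Finset

section VariationOfConstants

variable {R : Type*} (A B : ℕ → R) (Φ : ℕ → ℕ → R) (Y : ℕ → R)

theorem eq_evolution_add_sum_of_perturbed_recursion [Ring R]
    (hΦdiag : ∀ n, Φ n n = 1) (hΦrec : ∀ m n, m ≤ n → Φ (n + 1) m = A n * Φ n m)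
    (hY0 : Y 0 = 1) (hYsucc : ∀ n, Y (n + 1) = (A n + B n) * Y n) (n : ℕ) :
    Y n = Φ n 0 + ∑ i ∈ range n, Φ n (i + 1) * (B i * Y i) := by
  induction n with
  | zero => simp [hY0, hΦdiag]
  | succ n ih =>
    calc Y (n + 1)
        = A n * (Φ n 0 + ∑ i ∈ range n, Φ n (i + 1) * (B i * Y i)) + B n * Y n := by
          rw [← ih, hYsucc, add_mul]
      _ = Φ (n + 1) 0 + ∑ i ∈ range (n + 1), Φ (n + 1) (i + 1) * (B i * Y i) := by
          rw [mul_add, mul_sum, sum_range_succ, hΦdiag, one_mul, hΦrec 0 n n.zero_le, add_assoc]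
          congr 2
          refine sum_congr rfl fun i hi => ?_
          rw [hΦrec (i + 1) n (mem_range.1 hi), mul_assoc]

theorem norm_le_of_eq_evolution_add_sum [SeminormedRing R] {K α M : ℝ}
    (hΦ : ∀ m n, m ≤ n → ‖Φ n m‖ ≤ K * α ^ (n - m)) (hB : ∀ n, ‖B n‖ ≤ M)
    (hY : ∀ n, Y n = Φ n 0 + ∑ i ∈ range n, Φ n (i + 1) * (B i * Y i)) (n : ℕ) :
    ‖Y n‖ ≤ K * (α + K * M) ^ n := by
  set β := α + K * M
  have hM : 0 ≤ M := (norm_nonneg _).trans (hB 0)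
  induction n using Nat.strong_induction_on with
  | _ n ih =>
    have hterm : ∀ i ∈ range n,
        ‖Φ n (i + 1) * (B i * Y i)‖ ≤ K * M * K * (β ^ i * α ^ (n - 1 - i)) := by
      intro i hi
      have hi := mem_range.1 hi
      have hΦi : ‖Φ n (i + 1)‖ ≤ K * α ^ (n - 1 - i) := by
        simpa [Nat.sub_sub, add_comm 1 i] using hΦ (i + 1) n hi
      calc ‖Φ n (i + 1) * (B i * Y i)‖ ≤ ‖Φ n (i + 1)‖ * (‖B i‖ * ‖Y i‖) :=
            (norm_mul_le _ _).trans (by gcongr; exact norm_mul_le _ _)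
        _ ≤ K * α ^ (n - 1 - i) * (M * (K * β ^ i)) := by
            gcongr
            · exact (norm_nonneg _).trans hΦi
            · exact hB i
            · exact ih i hi
        _ = K * M * K * (β ^ i * α ^ (n - 1 - i)) := by ring
    have hgeom : K * M * (∑ i ∈ range n, β ^ i * α ^ (n - 1 - i)) = β ^ n - α ^ n := by
      rw [← geom_sum₂_mul, mul_comm]
      ring
    calc ‖Y n‖ ≤ ‖Φ n 0‖ + ∑ i ∈ range n, ‖Φ n (i + 1) * (B i * Y i)‖ := by
          rw [hY n]
          exact (norm_add_le _ _).trans (add_le_add_right (norm_sum_le _ _) _)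
      _ ≤ K * α ^ n + ∑ i ∈ range n, K * M * K * (β ^ i * α ^ (n - 1 - i)) := by
          gcongr
          · simpa using hΦ 0 n n.zero_le
          · exact hterm _ ‹_›
      _ = K * β ^ n := by
          rw [← mul_sum]
          linear_combination K * hgeom

end VariationOfConstants

theorem derivative_of_solution_bound_general
    {X : Type*} [NormedAddCommGroup X] [NormedSpace ℝ X]
    (A : ℤ → X →L[ℝ] X) (DF : ℤ → X → X →L[ℝ] X)
    (M₁ : ℝ) (hDFbound : ∀ t x, ‖DF t x‖ ≤ M₁)
    (Φ : ℤ → ℤ → X →L[ℝ] X)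
    (hΦdiag : ∀ t, Φ t t = ContinuousLinearMap.id ℝ X)
    (hΦrec : ∀ t s : ℤ, s ≤ t → Φ (t + 1) s = (A t).comp (Φ t s))
    (K α : ℝ)
    (hΦ : ∀ s t : ℤ, s ≤ t → ‖Φ t s‖ ≤ K * α ^ (t - s).toNat)
    (φ : ℤ → ℤ → X → X)
    (Dφ : ℤ → ℤ → X → X →L[ℝ] X)
    (hDinit : ∀ s (η : X), Dφ s s η = ContinuousLinearMap.id ℝ X)
    (hDsol : ∀ s t (η : X), s ≤ t →
      Dφ s (t + 1) η = (A t + DF t (φ s t η)).comp (Dφ s t η)) :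
    ∀ s t : ℤ, s ≤ t → ∀ η : X,
      ‖Dφ s t η‖ ≤ K * (α + K * M₁) ^ (t - s).toNat := by
  intro s t hst η
  obtain ⟨n, rfl⟩ : ∃ n : ℕ, t = s + n := ⟨(t - s).toNat, by omega⟩
  have hY := eq_evolution_add_sum_of_perturbed_recursion (fun n : ℕ ↦ A (s + n))
    (fun n : ℕ ↦ DF (s + n) (φ s (s + n) η)) (fun n m : ℕ ↦ Φ (s + n) (s + m))
    (fun n : ℕ ↦ Dφ s (s + n) η) (fun n ↦ hΦdiag _)
    (fun m n hmn ↦ by push_cast [← add_assoc]; exact hΦrec (s + n) (s + m) (by omega))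
    (by rw [Nat.cast_zero, add_zero]; exact hDinit s η)
    (fun n ↦ by push_cast [← add_assoc]; exact hDsol s (s + n) η (by omega))
  have hΦ' (m n : ℕ) (hmn : m ≤ n) : ‖Φ (s + n) (s + m)‖ ≤ K * α ^ (n - m) := by
    simpa [show (s + n - (s + m)).toNat = n - m by omega] using hΦ (s + m) (s + n) (by omega)
  simpa using norm_le_of_eq_evolution_add_sum _ _ _ hΦ' (fun i ↦ hDFbound _ _) hY n

/-- Bound on the derivative of the general solution with respect to
the initial value, via the variational equation. -/
theorem derivative_of_solution_bound
    {X : Type*} [NormedAddCommGroup X] [NormedSpace ℝ X]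
    (A : ℤ → X →L[ℝ] X) (F : ℤ → X → X) (DF : ℤ → X → X →L[ℝ] X)
    (hDF : ∀ t x, HasFDerivAt (F t) (DF t x) x)
    (M₁ : ℝ) (hM₁ : 0 ≤ M₁) (hDFbound : ∀ t x, ‖DF t x‖ ≤ M₁)
    (Φ : ℤ → ℤ → X →L[ℝ] X)
    (hΦdiag : ∀ t, Φ t t = ContinuousLinearMap.id ℝ X)
    (hΦrec : ∀ t s : ℤ, s ≤ t → Φ (t + 1) s = (A t).comp (Φ t s))
    (K α : ℝ) (hK : 1 ≤ K) (hα0 : 0 < α) (hα1 : α < 1)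
    (hΦ : ∀ s t : ℤ, s ≤ t → ‖Φ t s‖ ≤ K * α ^ (t - s).toNat)
    (φ : ℤ → ℤ → X → X)
    (hinit : ∀ s (η : X), φ s s η = η)
    (hsol : ∀ s t (η : X), s ≤ t → φ s (t + 1) η = A t (φ s t η) + F t (φ s t η))
    (Dφ : ℤ → ℤ → X → X →L[ℝ] X)
    (hDinit : ∀ s (η : X), Dφ s s η = ContinuousLinearMap.id ℝ X)
    (hDsol : ∀ s t (η : X), s ≤ t →
      Dφ s (t + 1) η = (A t + DF t (φ s t η)).comp (Dφ s t η)) :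
    ∀ s t : ℤ, s ≤ t → ∀ η : X,
      ‖Dφ s t η‖ ≤ K * (α + K * M₁) ^ (t - s).toNat :=
  derivative_of_solution_bound_general A DF M₁ hDFbound Φ hΦdiag hΦrec K α hΦ φ Dφ hDinit hDsol
end

section
/- If T : X → X is a bounded linear operator on a Banach space with ‖T − I‖ < 1, and G : X → X is a C^m map with DG(x) invertible for every x, which is also a proper map (preimages of compact sets are compact), then G is a C^m diffeomorphism of X onto itself. -/
/-!
By the inverse function theorem `G` is a local homeomorphism. A proper local homeomorphism is a
closed map with compact discrete, hence finite, fibres, and so a covering map. Since `X` is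
simply connected, the identity of `X` lifts through this covering to a section `s` of `G`; both
`s ∘ G` and `id` lift `G` and agree at one point, so they coincide by uniqueness of lifts over
the connected space `X`. Thus `G` is a homeomorphism, and its inverse is `C^m` because its
derivative is `(DG x)⁻¹`.
-/

open Function

section Covering

variable {E X : Type*} [TopologicalSpace E] [TopologicalSpace X] {p : E → X}

theorem IsProperMap.isCoveringMap_of_isLocalHomeomorph [T2Space E] (hp : IsProperMap p)
    (hl : IsLocalHomeomorph p) : IsCoveringMap p := by
  rw [isCoveringMap_iff_isCoveringMapOn_univ]
  refine hp.isClosedMap.isCoveringMapOn_of_isLocalHomeomorphOn (fun x _ ↦ ?_)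
    (isLocalHomeomorph_iff_isLocalHomeomorphOn_univ.mp hl |>.mono (Set.subset_univ _))
  have hfiber : IsDiscrete (p ⁻¹' {x}) := .of_openPartialHomeomorph p subset_rfl fun e _ ↦
    let ⟨φ, he, hφ⟩ := hl e; ⟨φ, he, hφ.symm⟩
  exact (hp.isCompact_preimage isCompact_singleton).finite hfiber

theorem IsCoveringMap.bijective_of_simplyConnectedSpace [PreconnectedSpace E] [Nonempty E]
    [SimplyConnectedSpace X] [LocallyPathConnectedSpace X] (hp : IsCoveringMap p) :
    Bijective p := by
  obtain ⟨e₀⟩ := ‹Nonempty E›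
  obtain ⟨s, hs₀, hps⟩ :=
    (hp.existsUnique_continuousMap_lifts (ContinuousMap.id X) (p e₀) e₀ rfl).exists
  have hsp : s ∘ p = id :=
    hp.eq_of_comp_eq (s.continuous.comp hp.continuous) continuous_id
      (by rw [← comp_assoc, hps]; rfl) e₀ hs₀
  exact ⟨LeftInverse.injective (congrFun hsp), RightInverse.surjective (congrFun hps)⟩

end Covering

theorem isLocalHomeomorph_of_hasStrictFDerivAt {𝕜 E F : Type*} [NontriviallyNormedField 𝕜]
    [NormedAddCommGroup E] [NormedSpace 𝕜 E] [CompleteSpace E]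
    [NormedAddCommGroup F] [NormedSpace 𝕜 F] [CompleteSpace F]
    {f : E → F} {f' : E → E ≃L[𝕜] F} (hf : ∀ x, HasStrictFDerivAt f (f' x : E →L[𝕜] F) x) :
    IsLocalHomeomorph f :=
  fun x ↦ ⟨(hf x).toOpenPartialHomeomorph f, (hf x).mem_toOpenPartialHomeomorph_source,
    (hf x).toOpenPartialHomeomorph_coe.symm⟩

theorem global_inverse_function_theorem_general
    {X : Type*} [NormedAddCommGroup X] [NormedSpace ℝ X] [CompleteSpace X]
    (m : ℕ) (hm : 1 ≤ m)
    (G : X → X) (hG : ContDiff ℝ m G)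
    (DG : X → X ≃L[ℝ] X)
    (hDG : ∀ x : X, HasFDerivAt G (DG x : X →L[ℝ] X) x)
    (hproper : ∀ C : Set X, IsCompact C → IsCompact (G ⁻¹' C)) :
    ∃ Ginv : X → X,
      Function.LeftInverse Ginv G ∧ Function.RightInverse Ginv G ∧
      ContDiff ℝ m Ginv := by
  have hlocal : IsLocalHomeomorph G := isLocalHomeomorph_of_hasStrictFDerivAt fun x ↦
    hG.contDiffAt.hasStrictFDerivAt' (hDG x) (by exact_mod_cast (by omega : m ≠ 0))
  have hcover : IsCoveringMap G :=
    (isProperMap_iff_isCompact_preimage.mpr ⟨hG.continuous, fun K hK ↦ hproper K hK⟩)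
      |>.isCoveringMap_of_isLocalHomeomorph hlocal
  let Φ : X ≃ₜ X := (Equiv.ofBijective G hcover.bijective_of_simplyConnectedSpace)
    |>.toHomeomorphOfContinuousOpen hG.continuous hlocal.isOpenMap
  exact ⟨Φ.symm, Φ.symm_apply_apply, Φ.apply_symm_apply, Φ.contDiff_symm hDG hG⟩

/-- A proper `C^m` map with everywhere invertible derivative
is a global `C^m` diffeomorphism (Hadamard), given also a bounded linear
operator `T` with `‖T − I‖ < 1`. -/
theorem global_inverse_function_theorem
    {X : Type*} [NormedAddCommGroup X] [NormedSpace ℝ X] [CompleteSpace X]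
    (T : X →L[ℝ] X) (hT : ‖T - ContinuousLinearMap.id ℝ X‖ < 1)
    (m : ℕ) (hm : 1 ≤ m)
    (G : X → X) (hG : ContDiff ℝ m G)
    (DG : X → X ≃L[ℝ] X)
    (hDG : ∀ x : X, HasFDerivAt G (DG x : X →L[ℝ] X) x)
    (hproper : ∀ C : Set X, IsCompact C → IsCompact (G ⁻¹' C)) :
    ∃ Ginv : X → X,
      Function.LeftInverse Ginv G ∧ Function.RightInverse Ginv G ∧
      ContDiff ℝ m Ginv :=
  global_inverse_function_theorem_general m hm G hG DG hDG hproper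
end

section
/- Global Lipschitz estimate for the inverse conjugacy: under ‖Φ(t,s)‖ ≤ K α^{t−s}, ‖F(t,x) − F(t,x̄)‖ ≤ L‖x−x̄‖, and the solution estimate ‖φ(s,t,η) − φ(s,t,η̄)‖ ≤ K(α + K L)^{t−s}‖η − η̄‖ with α + K L ≤ 1, the map G(t,η) := η − ∑_{s=τ₀}^{t−1} Φ(t,s+1) F(s, φ(s,t,η)) satisfies ‖G(t,η) − G(t,η̄)‖ ≤ (1 + K²L/(1−α))‖η − η̄‖. -/
/-!
Subtracting the two defining formulas, `G t η - G t η'` is `η - η'` minus a finite sum whose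
`s`-th term is `Φ(t, s+1)` applied to a difference of values of `F s`. Since `α + K L ≤ 1`, the
solution estimate makes `φ(s, t, ·)` `K`-Lipschitz, so the `s`-th term is at most
`K α^(t-1-s) · L · K ‖η - η'‖`, and the geometric series `∑ α^k = 1/(1 - α)` bounds the sum.
-/

open Finset

lemma sum_Icc_pow_toNat_sub_le {α : ℝ} (hα0 : 0 ≤ α) (hα1 : α < 1) (a b : ℤ) :
    ∑ s ∈ Icc a b, α ^ (b - s).toNat ≤ (1 - α)⁻¹ := by
  have hinj : Set.InjOn (fun s : ℤ => (b - s).toNat) (Icc a b) := by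
    intro s hs s' hs' h
    simp only [coe_Icc, Set.mem_Icc] at hs hs' h
    omega
  rw [← sum_image hinj, ← tsum_geometric_of_lt_one hα0 hα1]
  exact (summable_geometric_of_lt_one hα0 hα1).sum_le_tsum _ fun k _ => pow_nonneg hα0 k

lemma norm_sub_sum_sub_sub_sum_le {ι E : Type*} [SeminormedAddCommGroup E] (s : Finset ι)
    (x y : E) (f g : ι → E) :
    ‖(x - ∑ i ∈ s, f i) - (y - ∑ i ∈ s, g i)‖ ≤ ‖x - y‖ + ∑ i ∈ s, ‖f i - g i‖ := by
  rw [sub_sub_sub_comm, ← sum_sub_distrib]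
  exact (norm_sub_le _ _).trans (by gcongr; exact norm_sum_le _ _)

lemma norm_clm_apply_sub_le {E F : Type*} [SeminormedAddCommGroup E] [NormedSpace ℝ E]
    [SeminormedAddCommGroup F] [NormedSpace ℝ F] (A : E →L[ℝ] F) (f : E → E) {a L : ℝ}
    (hA : ‖A‖ ≤ a) (hf : ∀ x y, ‖f x - f y‖ ≤ L * ‖x - y‖) (x y : E) :
    ‖A (f x) - A (f y)‖ ≤ a * L * ‖x - y‖ := by
  rw [← map_sub, mul_assoc]
  exact A.le_of_opNorm_le_of_le hA (hf x y)

/-- global Lipschitz estimate for the inverse conjugacy `G`. -/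
theorem inverse_conjugacy_lipschitz
    {X : Type*} [NormedAddCommGroup X] [NormedSpace ℝ X]
    (τ₀ : ℤ) (Φ : ℤ → ℤ → X →L[ℝ] X)
    (K α L : ℝ) (hK : 1 ≤ K) (hα0 : 0 < α) (hα1 : α < 1) (hL : 0 ≤ L)
    (hone : α + K * L ≤ 1)
    (hΦ : ∀ s t : ℤ, τ₀ ≤ s → s ≤ t → ‖Φ t s‖ ≤ K * α ^ (t - s).toNat)
    (F : ℤ → X → X)
    (hF : ∀ t (x y : X), ‖F t x - F t y‖ ≤ L * ‖x - y‖)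
    (φ : ℤ → ℤ → X → X)
    (hφ : ∀ s t : ℤ, s ≤ t → ∀ η η' : X,
      ‖φ s t η - φ s t η'‖ ≤ K * (α + K * L) ^ (t - s).toNat * ‖η - η'‖)
    (G : ℤ → X → X)
    (hG : ∀ t (η : X),
      G t η = η - ∑ s ∈ Finset.Icc τ₀ (t - 1), Φ t (s + 1) (F s (φ s t η))) :
    ∀ t : ℤ, τ₀ ≤ t → ∀ η η' : X,
      ‖G t η - G t η'‖ ≤ (1 + K ^ 2 * L / (1 - α)) * ‖η - η'‖ := by
  intro t _ η η'
  have hterm : ∀ s ∈ Icc τ₀ (t - 1), ‖Φ t (s + 1) (F s (φ s t η)) - Φ t (s + 1) (F s (φ s t η'))‖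
      ≤ K ^ 2 * L * ‖η - η'‖ * α ^ (t - 1 - s).toNat := by
    intro s hs
    rw [mem_Icc] at hs
    have hΦs := hΦ (s + 1) t (by omega) (by omega)
    rw [show t - (s + 1) = t - 1 - s by ring] at hΦs
    have hφs : ‖φ s t η - φ s t η'‖ ≤ K * ‖η - η'‖ := by
      have hcontr : (α + K * L) ^ (t - s).toNat ≤ 1 := pow_le_one₀ (by positivity) hone
      refine (hφ s t (by omega) η η').trans ?_
      gcongr
      exact mul_le_of_le_one_right (by positivity) hcontr
    calc _ ≤ K * α ^ (t - 1 - s).toNat * L * ‖φ s t η - φ s t η'‖ :=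
          norm_clm_apply_sub_le _ _ hΦs (hF s) _ _
      _ ≤ K * α ^ (t - 1 - s).toNat * L * (K * ‖η - η'‖) := by gcongr
      _ = _ := by ring
  calc ‖G t η - G t η'‖ ≤ ‖η - η'‖ + ∑ s ∈ Icc τ₀ (t - 1),
        ‖Φ t (s + 1) (F s (φ s t η)) - Φ t (s + 1) (F s (φ s t η'))‖ := by
        rw [hG, hG]; exact norm_sub_sum_sub_sub_sum_le _ _ _ _ _
    _ ≤ ‖η - η'‖ + K ^ 2 * L * ‖η - η'‖ * ∑ s ∈ Icc τ₀ (t - 1), α ^ (t - 1 - s).toNat := by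
        rw [mul_sum]; gcongr with s hs; exact hterm s hs
    _ ≤ ‖η - η'‖ + K ^ 2 * L * ‖η - η'‖ * (1 - α)⁻¹ := by
        gcongr; exact sum_Icc_pow_toNat_sub_le hα0.le hα1 _ _
    _ = (1 + K ^ 2 * L / (1 - α)) * ‖η - η'‖ := by ring
end
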